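/- arXiv:1712.09281 — 5 statements merged into one kernel-verified Lean document; each statement's English description precedes it below -/
import Mathlib

section
/- For every μ ∈ Λ, the Schur complement satisfies (Sμ)(μ) = sup_{0 ≠ v ∈ U} b(v,μ)² / a(v,v). -/
/-- The Schur complement `S = B A⁻¹ B'` of a symmetric saddle point problem satisfies
`(Sμ)(μ) = sup_{0 ≠ v ∈ U} b(v,μ)² / a(v,v)` for every `μ ∈ Λ`.
Here `S μ = b (Ainv (b.flip μ))`, where `Ainv` is the inverse of the operator
`A : U → U'` induced by `a`. (Note that at `v = 0` the summand `b(v,μ)²/a(v,v)`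
equals `0/0 = 0` in Lean, which does not affect the supremum.) -/
theorem stmt_0
    {U Λ : Type*} [NormedAddCommGroup U] [InnerProductSpace ℝ U] [CompleteSpace U]
    [NormedAddCommGroup Λ] [InnerProductSpace ℝ Λ] [CompleteSpace Λ]
    (Ca α Cb β₀ : ℝ) (hα : 0 < α) (hβ₀ : 0 < β₀)
    (a : U →L[ℝ] U →L[ℝ] ℝ) (b : U →L[ℝ] Λ →L[ℝ] ℝ)
    (ha_bdd : ∀ u v, |a u v| ≤ Ca * ‖u‖ * ‖v‖)
    (ha_symm : ∀ u v, a u v = a v u)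
    (ha_coer : ∀ v, α * ‖v‖ ^ 2 ≤ a v v)
    (hb_bdd : ∀ v μ, |b v μ| ≤ Cb * ‖v‖ * ‖μ‖)
    (hb_infsup : ∀ μ : Λ, β₀ * ‖μ‖ ≤ ⨆ w : U, b w μ / ‖w‖)
    (Ainv : (U →L[ℝ] ℝ) →L[ℝ] U)
    (hAinv : ∀ (φ : U →L[ℝ] ℝ) (v : U), a (Ainv φ) v = φ v) :
    ∀ μ : Λ, b (Ainv (b.flip μ)) μ = ⨆ v : U, (b v μ) ^ 2 / a v v := by
  intro μ
  set u : U := Ainv (b.flip μ) with hu_def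
  have hu : ∀ v : U, a u v = b v μ := fun v => by
    simpa using hAinv (b.flip μ) v
  have hann : ∀ v : U, 0 ≤ a v v := fun v =>
    le_trans (by positivity) (ha_coer v)
  -- Cauchy-Schwarz for `a`
  have hCS : ∀ v : U, (a u v) ^ 2 ≤ a u u * a v v := by
    intro v
    by_cases hv : a v v = 0
    · have hv0 : v = 0 := by
        have h1 := ha_coer v
        rw [hv] at h1
        have h2 : ‖v‖ ^ 2 ≤ 0 := by
          by_contra h
          push_neg at h
          nlinarith [mul_pos hα h]
        have h3 : ‖v‖ = 0 :=
          pow_eq_zero_iff two_ne_zero |>.mp (le_antisymm h2 (sq_nonneg _))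
        exact norm_eq_zero.mp h3
      simp [hv0, hv]
    · have hvpos : 0 < a v v := lt_of_le_of_ne (hann v) (Ne.symm hv)
      have hexp := hann (a v v • u - a u v • v)
      simp only [map_sub, map_smul, ContinuousLinearMap.coe_sub',
        ContinuousLinearMap.coe_smul', Pi.sub_apply, Pi.smul_apply,
        smul_eq_mul] at hexp
      rw [← ha_symm u v] at hexp
      nlinarith [hexp, hvpos]
  have hbu : b u μ = a u u := (hu u).symm
  -- the function under the sup equals v ↦ (a u v)^2 / a v v
  have hf : ∀ v : U, (b v μ) ^ 2 / a v v = (a u v) ^ 2 / a v v := by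
    intro v; rw [hu v]
  have hbound : ∀ v : U, (b v μ) ^ 2 / a v v ≤ a u u := by
    intro v
    rw [hf v]
    by_cases hv : a v v = 0
    · simp [hv, hann u]
    · have hvpos : 0 < a v v := lt_of_le_of_ne (hann v) (Ne.symm hv)
      rw [div_le_iff₀ hvpos]
      exact hCS v
  have hBdd : BddAbove (Set.range fun v : U => (b v μ) ^ 2 / a v v) :=
    ⟨a u u, by rintro x ⟨v, rfl⟩; exact hbound v⟩
  have hle : (⨆ v : U, (b v μ) ^ 2 / a v v) ≤ a u u := ciSup_le hbound
  have hat : (b u μ) ^ 2 / a u u = a u u := by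
    by_cases h0 : a u u = 0
    · simp [hbu, h0]
    · rw [hbu]; field_simp
  have hge : a u u ≤ ⨆ v : U, (b v μ) ^ 2 / a v v := by
    calc a u u = (b u μ) ^ 2 / a u u := hat.symm
      _ ≤ _ := le_ciSup hBdd u
  rw [hbu]
  exact le_antisymm hge hle
end

section
/- There exist constants c > 0 and C > 0, depending only on Ca, α, Cb, β₀, r and R, such that for every closed subspace Λ₀ ⊆ Λ, every preconditioner M₀ as above, and every χ ∈ Λ₀: c‖λ₀ − χ‖_Λ ≤ ‖u^{λ₀} − u^χ‖_U ≤ C‖λ₀ − χ‖_Λ, and c‖λ₀ − χ‖_Λ ≤ sup_{0≠μ∈Λ₀} (b(u^χ, μ) + g(μ)) / ((M₀μ)(μ))^{1/2} ≤ C‖λ₀ − χ‖_Λ. -/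
set_option maxHeartbeats 1000000 in
/-- A posteriori error estimation (Proposition apost, first part): there are constants
`c, C > 0` depending only on `Ca, α, Cb, β₀, r, R` such that for every closed subspace
`Λ₀ ⊆ Λ`, every preconditioner `M₀` (symmetric, with `r‖μ‖² ≤ (M₀μ)(μ) ≤ R‖μ‖²`),
the Galerkin approximation `lam₀` of `lam` (= λ), and every `χ ∈ Λ₀`:
`c‖λ₀−χ‖ ≤ ‖u^{λ₀}−u^χ‖ ≤ C‖λ₀−χ‖` and
`c‖λ₀−χ‖ ≤ sup_{0≠μ∈Λ₀} (b(u^χ,μ)+g(μ))/((M₀μ)(μ))^{1/2} ≤ C‖λ₀−χ‖`.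
(At `μ = 0` the quotient is `0/0 = 0`, not affecting the supremum.) -/
theorem stmt_10
    {U Λ : Type*} [NormedAddCommGroup U] [InnerProductSpace ℝ U] [CompleteSpace U]
    [NormedAddCommGroup Λ] [InnerProductSpace ℝ Λ] [CompleteSpace Λ]
    (Ca α Cb β₀ : ℝ) (hα : 0 < α) (hβ₀ : 0 < β₀)
    (a : U →L[ℝ] U →L[ℝ] ℝ) (b : U →L[ℝ] Λ →L[ℝ] ℝ)
    (ha_bdd : ∀ u v, |a u v| ≤ Ca * ‖u‖ * ‖v‖)
    (ha_symm : ∀ u v, a u v = a v u)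
    (ha_coer : ∀ v, α * ‖v‖ ^ 2 ≤ a v v)
    (hb_bdd : ∀ v μ, |b v μ| ≤ Cb * ‖v‖ * ‖μ‖)
    (hb_infsup : ∀ μ : Λ, β₀ * ‖μ‖ ≤ ⨆ w : U, b w μ / ‖w‖)
    (Ainv : (U →L[ℝ] ℝ) →L[ℝ] U)
    (hAinv : ∀ (φ : U →L[ℝ] ℝ) (v : U), a (Ainv φ) v = φ v)
    (f : U →L[ℝ] ℝ) (g : Λ →L[ℝ] ℝ) (u₀ : U) (lam : Λ)
    (hsol : ∀ (v : U) (μ : Λ), a u₀ v + b v lam + b u₀ μ = f v - g μ)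
    (r R : ℝ) (hr : 0 < r) (hrR : r ≤ R) :
    ∃ c > (0:ℝ), ∃ C > (0:ℝ), ∀ (Λ₀ : Submodule ℝ Λ), IsClosed (Λ₀ : Set Λ) →
      ∀ (M₀ : Λ₀ →L[ℝ] Λ₀ →L[ℝ] ℝ),
        (∀ μ ν : Λ₀, M₀ μ ν = M₀ ν μ) →
        (∀ μ : Λ₀, r * ‖μ‖ ^ 2 ≤ M₀ μ μ ∧ M₀ μ μ ≤ R * ‖μ‖ ^ 2) →
        ∀ lam₀ : Λ₀,
          (∀ μ : Λ₀, b (Ainv (b.flip (lam₀ : Λ))) (μ : Λ) = b (Ainv (b.flip lam)) (μ : Λ)) →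
          ∀ χ : Λ₀,
            (c * ‖(lam₀ : Λ) - (χ : Λ)‖
                ≤ ‖Ainv (f - b.flip (lam₀ : Λ)) - Ainv (f - b.flip (χ : Λ))‖
              ∧ ‖Ainv (f - b.flip (lam₀ : Λ)) - Ainv (f - b.flip (χ : Λ))‖
                ≤ C * ‖(lam₀ : Λ) - (χ : Λ)‖)
            ∧ (c * ‖(lam₀ : Λ) - (χ : Λ)‖
                ≤ (⨆ μ : Λ₀, (b (Ainv (f - b.flip (χ : Λ))) (μ : Λ) + g (μ : Λ))
                    / Real.sqrt (M₀ μ μ))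
              ∧ (⨆ μ : Λ₀, (b (Ainv (f - b.flip (χ : Λ))) (μ : Λ) + g (μ : Λ))
                    / Real.sqrt (M₀ μ μ))
                ≤ C * ‖(lam₀ : Λ) - (χ : Λ)‖) := by
  haveI : Nonempty U := ⟨0⟩
  set Ca' := max Ca 1 with hCa'def
  set Cb' := max Cb 1 with hCb'def
  have hCa' : (0:ℝ) < Ca' := lt_max_of_lt_right one_pos
  have hCb' : (0:ℝ) < Cb' := lt_max_of_lt_right one_pos
  have hR : (0:ℝ) < R := hr.trans_le hrR
  have hsR : (0:ℝ) < Real.sqrt R := Real.sqrt_pos.mpr hR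
  have hsr : (0:ℝ) < Real.sqrt r := Real.sqrt_pos.mpr hr
  set c₁ := β₀ / Ca' with hc₁def
  have hc₁ : 0 < c₁ := div_pos hβ₀ hCa'
  refine ⟨min c₁ (α * c₁ ^ 2 / Real.sqrt R), lt_min hc₁ (by positivity),
      max (Cb' / α) ((Cb' / α) * (Cb' / Real.sqrt r)),
      lt_max_of_lt_left (div_pos hCb' hα), ?_⟩
  intro Λ₀ _hclosed M₀ hM₀symm hM₀ lam₀ hGal χ
  set e : Λ := (lam₀ : Λ) - (χ : Λ) with hedef
  set w : U := Ainv (f - b.flip (lam₀ : Λ)) - Ainv (f - b.flip (χ : Λ)) with hwdef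
  -- identity (1): a w v = -(b v e)
  have haw : ∀ v : U, a w v = -(b v e) := by
    intro v
    have h1 : a w v = a (Ainv (f - b.flip (lam₀ : Λ))) v - a (Ainv (f - b.flip (χ : Λ))) v := by
      rw [hwdef]; simp [map_sub, ContinuousLinearMap.sub_apply]
    rw [h1, hAinv, hAinv]
    simp only [ContinuousLinearMap.sub_apply, ContinuousLinearMap.flip_apply, hedef, map_sub]
    ring
  -- u₀ = Ainv (f - b.flip lam)
  have hu0v : ∀ v : U, a u₀ v = f v - b v lam := by
    intro v
    have h := hsol v 0
    simp only [map_zero] at h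
    linarith
  have hu0 : u₀ = Ainv (f - b.flip lam) := by
    have hd : ∀ v, a (u₀ - Ainv (f - b.flip lam)) v = 0 := by
      intro v
      have h2 := hAinv (f - b.flip lam) v
      have h3 : a (u₀ - Ainv (f - b.flip lam)) v
          = a u₀ v - a (Ainv (f - b.flip lam)) v := by
        rw [map_sub a, ContinuousLinearMap.sub_apply]
      rw [h3, hu0v v, h2]
      simp only [ContinuousLinearMap.sub_apply, ContinuousLinearMap.flip_apply]
      ring
    have h2 := ha_coer (u₀ - Ainv (f - b.flip lam))
    rw [hd] at h2
    have h3 : ‖u₀ - Ainv (f - b.flip lam)‖ ^ 2 = 0 := by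
      nlinarith [sq_nonneg ‖u₀ - Ainv (f - b.flip lam)‖]
    have h4 : u₀ - Ainv (f - b.flip lam) = 0 := by
      rw [← norm_eq_zero]
      exact pow_eq_zero_iff (n := 2) (by norm_num) |>.mp h3
    exact sub_eq_zero.mp h4
  have hg : ∀ μ : Λ, g μ = -(b u₀ μ) := by
    intro μ
    have h := hsol 0 μ
    simp only [map_zero, ContinuousLinearMap.zero_apply] at h
    linarith
  -- identity (2)
  have hkey : ∀ μ : Λ₀,
      b (Ainv (f - b.flip (χ : Λ))) (μ : Λ) + g (μ : Λ) = -(b w (μ : Λ)) := by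
    intro μ
    rw [hg, hu0, hwdef]
    have h := hGal μ
    simp only [map_sub, ContinuousLinearMap.sub_apply] at h ⊢
    linarith
  -- norm bounds for w
  have haww : α * ‖w‖ ^ 2 ≤ -(b w e) := by rw [← haw w]; exact ha_coer w
  have hbwe : -(b w e) ≤ Cb' * ‖w‖ * ‖e‖ := by
    have h1 := hb_bdd w e
    have h2 : Cb * ‖w‖ * ‖e‖ ≤ Cb' * ‖w‖ * ‖e‖ := by
      have h3 : (0:ℝ) ≤ ‖w‖ * ‖e‖ := mul_nonneg (norm_nonneg w) (norm_nonneg e)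
      nlinarith [le_max_left Cb 1]
    nlinarith [neg_abs_le (b w e)]
  have hup : ‖w‖ ≤ Cb' / α * ‖e‖ := by
    rcases eq_or_lt_of_le (norm_nonneg w) with h0 | h0
    · rw [← h0]; positivity
    · rw [div_mul_eq_mul_div, le_div_iff₀ hα]
      nlinarith
  have hsup_le : (⨆ v : U, b v e / ‖v‖) ≤ Ca' * ‖w‖ := by
    apply ciSup_le
    intro v
    rcases eq_or_ne v 0 with rfl | hv
    · simp only [map_zero, ContinuousLinearMap.zero_apply, norm_zero, div_zero]
      exact mul_nonneg hCa'.le (norm_nonneg w)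
    · rw [div_le_iff₀ (norm_pos_iff.mpr hv)]
      have h1 : b v e = -(a w v) := by rw [haw v]; ring
      have h2 := ha_bdd w v
      have h3 : (0:ℝ) ≤ ‖w‖ * ‖v‖ := mul_nonneg (norm_nonneg w) (norm_nonneg v)
      have h4 : Ca * ‖w‖ * ‖v‖ ≤ Ca' * ‖w‖ * ‖v‖ := by
        nlinarith [le_max_left Ca 1]
      nlinarith [neg_abs_le (a w v)]
  have hlow : c₁ * ‖e‖ ≤ ‖w‖ := by
    have h1 := (hb_infsup e).trans hsup_le
    rw [hc₁def, div_mul_eq_mul_div, div_le_iff₀ hCa']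
    nlinarith
  -- the sup function
  have hcoenorm : ∀ μ : Λ₀, ‖(μ : Λ)‖ = ‖μ‖ := fun μ => rfl
  have hF : ∀ μ : Λ₀,
      (b (Ainv (f - b.flip (χ : Λ))) (μ : Λ) + g (μ : Λ)) / Real.sqrt (M₀ μ μ)
        = (-(b w (μ : Λ))) / Real.sqrt (M₀ μ μ) := fun μ => by rw [hkey μ]
  have hFbound : ∀ μ : Λ₀,
      (-(b w (μ : Λ))) / Real.sqrt (M₀ μ μ) ≤ (Cb' / Real.sqrt r) * ‖w‖ := by
    intro μ
    rcases eq_or_ne μ 0 with rfl | hμ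
    · have hz : (((0:Λ₀) : Λ)) = 0 := rfl
      rw [hz, ContinuousLinearMap.map_zero, neg_zero, zero_div]
      exact mul_nonneg (div_nonneg hCb'.le hsr.le) (norm_nonneg w)
    · have hμn : (0:ℝ) < ‖μ‖ := norm_pos_iff.mpr hμ
      have hM := (hM₀ μ).1
      have hMpos : (0:ℝ) < M₀ μ μ := lt_of_lt_of_le (by positivity) hM
      have hden : Real.sqrt r * ‖μ‖ ≤ Real.sqrt (M₀ μ μ) := by
        have h5 : Real.sqrt (r * ‖μ‖ ^ 2) ≤ Real.sqrt (M₀ μ μ) := Real.sqrt_le_sqrt hM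
        rwa [Real.sqrt_mul hr.le, Real.sqrt_sq (norm_nonneg _)] at h5
      have hdenpos : (0:ℝ) < Real.sqrt (M₀ μ μ) := Real.sqrt_pos.mpr hMpos
      rw [div_le_iff₀ hdenpos]
      have hnum : -(b w (μ : Λ)) ≤ Cb' * ‖w‖ * ‖μ‖ := by
        have h1 := hb_bdd w (μ : Λ)
        rw [hcoenorm] at h1
        have h3 : (0:ℝ) ≤ ‖w‖ * ‖μ‖ := mul_nonneg (norm_nonneg w) hμn.le
        nlinarith [neg_abs_le (b w (μ : Λ)), le_max_left Cb 1]
      calc -(b w (μ : Λ)) ≤ Cb' * ‖w‖ * ‖μ‖ := hnum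
        _ = Cb' / Real.sqrt r * ‖w‖ * (Real.sqrt r * ‖μ‖) := by
            field_simp
        _ ≤ Cb' / Real.sqrt r * ‖w‖ * Real.sqrt (M₀ μ μ) := by
            apply mul_le_mul_of_nonneg_left hden (by positivity)
  have hbdd : BddAbove (Set.range fun μ : Λ₀ =>
      (b (Ainv (f - b.flip (χ : Λ))) (μ : Λ) + g (μ : Λ)) / Real.sqrt (M₀ μ μ)) := by
    refine ⟨(Cb' / Real.sqrt r) * ‖w‖, ?_⟩
    rintro x ⟨μ, rfl⟩
    dsimp only
    rw [hkey μ]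
    exact hFbound μ
  constructor
  · constructor
    · calc min c₁ (α * c₁ ^ 2 / Real.sqrt R) * ‖e‖ ≤ c₁ * ‖e‖ :=
            mul_le_mul_of_nonneg_right (min_le_left _ _) (norm_nonneg e)
        _ ≤ ‖w‖ := hlow
    · calc ‖w‖ ≤ Cb' / α * ‖e‖ := hup
        _ ≤ max (Cb' / α) (Cb' / α * (Cb' / Real.sqrt r)) * ‖e‖ :=
            mul_le_mul_of_nonneg_right (le_max_left _ _) (norm_nonneg e)
  constructor
  · -- lower bound for the sup
    rcases eq_or_ne e 0 with he | he
    · have h0 : (b (Ainv (f - b.flip (χ : Λ))) ((0:Λ₀) : Λ) + g ((0:Λ₀) : Λ))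
          / Real.sqrt (M₀ 0 0) = 0 := by
        have hz : (((0:Λ₀) : Λ)) = 0 := rfl
        rw [hz, (b _).map_zero, g.map_zero, add_zero, zero_div]
      have h1 := le_ciSup hbdd (0 : Λ₀)
      rw [h0] at h1
      rw [hedef] at he ⊢
      rw [he, norm_zero, mul_zero]
      exact h1
    · have hen : (0:ℝ) < ‖e‖ := norm_pos_iff.mpr he
      set μe : Λ₀ := lam₀ - χ with hμedef
      have hμcoe : ((μe : Λ₀) : Λ) = e := by simp [hμedef, hedef]
      have hμnorm : ‖μe‖ = ‖e‖ := by rw [← hcoenorm, hμcoe]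
      have hMle := (hM₀ μe).2
      have hMge := (hM₀ μe).1
      have hMpos : (0:ℝ) < M₀ μe μe := by
        apply lt_of_lt_of_le _ hMge
        rw [hμnorm]; positivity
      have hdenpos : (0:ℝ) < Real.sqrt (M₀ μe μe) := Real.sqrt_pos.mpr hMpos
      have hden : Real.sqrt (M₀ μe μe) ≤ Real.sqrt R * ‖e‖ := by
        have h5 : Real.sqrt (M₀ μe μe) ≤ Real.sqrt (R * ‖e‖ ^ 2) := by
          apply Real.sqrt_le_sqrt
          rw [hμnorm] at hMle; exact hMle
        rwa [Real.sqrt_mul hR.le, Real.sqrt_sq (norm_nonneg _)] at h5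
      have hnum : α * (c₁ * ‖e‖) ^ 2 ≤ -(b w e) := by
        have hce : (0:ℝ) ≤ c₁ * ‖e‖ := mul_nonneg hc₁.le (norm_nonneg e)
        have hsq : (c₁ * ‖e‖) ^ 2 ≤ ‖w‖ ^ 2 := by nlinarith [hlow]
        calc α * (c₁ * ‖e‖) ^ 2 ≤ α * ‖w‖ ^ 2 := by nlinarith [hsq]
          _ ≤ -(b w e) := haww
      have hnumnn : (0:ℝ) ≤ -(b w e) := le_trans (by positivity) hnum
      have hdiv : α * (c₁ * ‖e‖) ^ 2 / (Real.sqrt R * ‖e‖)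
          ≤ -(b w e) / Real.sqrt (M₀ μe μe) :=
        div_le_div₀ hnumnn hnum hdenpos hden
      have heq : α * (c₁ * ‖e‖) ^ 2 / (Real.sqrt R * ‖e‖)
          = (α * c₁ ^ 2 / Real.sqrt R) * ‖e‖ := by
        field_simp
      have h1 := le_ciSup hbdd μe
      rw [hF μe, hμcoe] at h1
      calc min c₁ (α * c₁ ^ 2 / Real.sqrt R) * ‖e‖
          ≤ (α * c₁ ^ 2 / Real.sqrt R) * ‖e‖ :=
            mul_le_mul_of_nonneg_right (min_le_right _ _) (norm_nonneg e)
        _ = α * (c₁ * ‖e‖) ^ 2 / (Real.sqrt R * ‖e‖) := heq.symm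
        _ ≤ -(b w e) / Real.sqrt (M₀ μe μe) := hdiv
        _ ≤ _ := h1
  · -- upper bound for the sup
    apply ciSup_le
    intro μ
    rw [hF μ]
    calc (-(b w (μ : Λ))) / Real.sqrt (M₀ μ μ) ≤ (Cb' / Real.sqrt r) * ‖w‖ := hFbound μ
      _ ≤ (Cb' / Real.sqrt r) * (Cb' / α * ‖e‖) :=
          mul_le_mul_of_nonneg_left hup (by positivity)
      _ = (Cb' / α * (Cb' / Real.sqrt r)) * ‖e‖ := by ring
      _ ≤ max (Cb' / α) (Cb' / α * (Cb' / Real.sqrt r)) * ‖e‖ :=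
          mul_le_mul_of_nonneg_right (le_max_right _ _) (norm_nonneg e)
end

section
/- There exist constants c > 0 and C > 0, depending only on Ca, α, Cb and β₀, such that for every closed subspace Λ₀ ⊆ Λ: c‖λ − λ₀‖_Λ ≤ ‖u − u^{λ₀}‖_U ≤ C‖λ − λ₀‖_Λ, and c‖λ − λ₀‖_Λ ≤ ‖Bu^{λ₀} + g‖_{Λ'} ≤ C‖λ − λ₀‖_Λ. -/
/-- A posteriori error estimation (Proposition apost, estimate (second1)): there are
constants `c, C > 0` depending only on `Ca, α, Cb, β₀` such that for every closed
subspace `Λ₀ ⊆ Λ` with Galerkin approximation `lam₀` of `lam` (= λ):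
`c‖λ−λ₀‖ ≤ ‖u−u^{λ₀}‖ ≤ C‖λ−λ₀‖` and `c‖λ−λ₀‖ ≤ ‖Bu^{λ₀}+g‖_{Λ'} ≤ C‖λ−λ₀‖`,
where `u^{λ₀} = Ainv (f - b.flip lam₀)`. -/
theorem stmt_12
    {U Λ : Type*} [NormedAddCommGroup U] [InnerProductSpace ℝ U] [CompleteSpace U]
    [NormedAddCommGroup Λ] [InnerProductSpace ℝ Λ] [CompleteSpace Λ]
    (Ca α Cb β₀ : ℝ) (hα : 0 < α) (hβ₀ : 0 < β₀)
    (a : U →L[ℝ] U →L[ℝ] ℝ) (b : U →L[ℝ] Λ →L[ℝ] ℝ)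
    (ha_bdd : ∀ u v, |a u v| ≤ Ca * ‖u‖ * ‖v‖)
    (ha_symm : ∀ u v, a u v = a v u)
    (ha_coer : ∀ v, α * ‖v‖ ^ 2 ≤ a v v)
    (hb_bdd : ∀ v μ, |b v μ| ≤ Cb * ‖v‖ * ‖μ‖)
    (hb_infsup : ∀ μ : Λ, β₀ * ‖μ‖ ≤ ⨆ w : U, b w μ / ‖w‖)
    (Ainv : (U →L[ℝ] ℝ) →L[ℝ] U)
    (hAinv : ∀ (φ : U →L[ℝ] ℝ) (v : U), a (Ainv φ) v = φ v)
    (f : U →L[ℝ] ℝ) (g : Λ →L[ℝ] ℝ) (u₀ : U) (lam : Λ)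
    (hsol : ∀ (v : U) (μ : Λ), a u₀ v + b v lam + b u₀ μ = f v - g μ) :
    ∃ c > (0:ℝ), ∃ C > (0:ℝ), ∀ (Λ₀ : Submodule ℝ Λ), IsClosed (Λ₀ : Set Λ) →
      ∀ lam₀ ∈ Λ₀,
        (∀ μ ∈ Λ₀, b (Ainv (b.flip lam₀)) μ = b (Ainv (b.flip lam)) μ) →
        (c * ‖lam - lam₀‖ ≤ ‖u₀ - Ainv (f - b.flip lam₀)‖
          ∧ ‖u₀ - Ainv (f - b.flip lam₀)‖ ≤ C * ‖lam - lam₀‖)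
        ∧ (c * ‖lam - lam₀‖ ≤ ‖b (Ainv (f - b.flip lam₀)) + g‖
          ∧ ‖b (Ainv (f - b.flip lam₀)) + g‖ ≤ C * ‖lam - lam₀‖) := by
  set Ca' := max Ca α with hCa'def
  have hCa'pos : 0 < Ca' := lt_max_of_lt_right hα
  set Cb' := max Cb 0 + 1 with hCb'def
  have hCb'pos : 0 < Cb' := by positivity
  have hCble : Cb ≤ Cb' := le_trans (le_max_left _ _) (by linarith)
  have hCale : Ca ≤ Ca' := le_max_left _ _
  have hb_bdd' : ∀ v μ, |b v μ| ≤ Cb' * ‖v‖ * ‖μ‖ := by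
    intro v μ
    refine (hb_bdd v μ).trans ?_
    have h1 : (0:ℝ) ≤ ‖v‖ * ‖μ‖ := by positivity
    nlinarith
  have ha_bdd' : ∀ u v, |a u v| ≤ Ca' * ‖u‖ * ‖v‖ := by
    intro u v
    refine (ha_bdd u v).trans ?_
    have h1 : (0:ℝ) ≤ ‖u‖ * ‖v‖ := by positivity
    nlinarith
  refine ⟨min (β₀ / Ca') (α * (β₀ / Ca') ^ 2), by positivity,
    max (Cb' / α) (Cb' ^ 2 / α), by positivity, ?_⟩
  intro Λ₀ _ lam₀ _ _
  -- u₀ is A⁻¹(f - B'λ)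
  have hu : u₀ = Ainv (f - b.flip lam) := by
    have h1 : ∀ v : U, a (u₀ - Ainv (f - b.flip lam)) v = 0 := by
      intro v
      have h2 := hsol v 0
      simp only [map_zero, ContinuousLinearMap.zero_apply, add_zero, sub_zero] at h2
      have h3 := hAinv (f - b.flip lam) v
      simp only [ContinuousLinearMap.sub_apply, ContinuousLinearMap.flip_apply] at h3
      rw [map_sub, ContinuousLinearMap.sub_apply]
      linarith
    have h4 := ha_coer (u₀ - Ainv (f - b.flip lam))
    rw [h1] at h4
    have h6 : ‖u₀ - Ainv (f - b.flip lam)‖ ^ 2 ≤ 0 := by nlinarith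
    have h7 : ‖u₀ - Ainv (f - b.flip lam)‖ ^ 2 = 0 := le_antisymm h6 (sq_nonneg _)
    exact sub_eq_zero.mp (norm_eq_zero.mp
      ((pow_eq_zero_iff (by norm_num : (2:ℕ) ≠ 0)).mp h7))
  set e := lam₀ - lam with he_def
  set w := u₀ - Ainv (f - b.flip lam₀) with hw_def
  -- w = A⁻¹(B'e)
  have hw : w = Ainv (b.flip e) := by
    rw [hw_def, hu, ← map_sub]
    congr 1
    rw [he_def, map_sub]
    abel
  -- the key identity a w v = b v e
  have key : ∀ v : U, a w v = b v e := by
    intro v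
    rw [hw, hAinv]
    simp [ContinuousLinearMap.flip_apply]
  have hnorm_e : ‖lam - lam₀‖ = ‖e‖ := by rw [he_def, norm_sub_rev]
  -- estimate: α‖w‖² ≤ a w w = b w e
  have haww : α * ‖w‖ ^ 2 ≤ b w e := by
    have := ha_coer w
    rw [key w] at this
    exact this
  -- upper bound on ‖w‖
  have est1 : ‖w‖ ≤ Cb' / α * ‖e‖ := by
    have h1 : α * ‖w‖ ^ 2 ≤ Cb' * ‖w‖ * ‖e‖ :=
      haww.trans ((le_abs_self _).trans (hb_bdd' w e))
    rcases eq_or_lt_of_le (norm_nonneg w) with h | h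
    · rw [← h]; positivity
    · have h2 : α * ‖w‖ ≤ Cb' * ‖e‖ := by nlinarith
      rw [div_mul_eq_mul_div, le_div_iff₀ hα]
      nlinarith
  -- lower bound on ‖w‖ via inf-sup
  have est2 : β₀ * ‖e‖ ≤ Ca' * ‖w‖ := by
    refine (hb_infsup e).trans (ciSup_le fun v => ?_)
    rcases eq_or_ne v 0 with rfl | hv
    · simp; positivity
    · have hvpos : (0:ℝ) < ‖v‖ := norm_pos_iff.mpr hv
      rw [div_le_iff₀ hvpos]
      calc b v e = a w v := (key v).symm
        _ ≤ |a w v| := le_abs_self _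
        _ ≤ Ca' * ‖w‖ * ‖v‖ := ha_bdd' w v
  have est2' : β₀ / Ca' * ‖e‖ ≤ ‖w‖ := by
    rw [div_mul_eq_mul_div, div_le_iff₀ hCa'pos]
    nlinarith
  -- operator norm bounds for b w
  have est3 : ‖b w‖ ≤ Cb' * ‖w‖ := by
    refine ContinuousLinearMap.opNorm_le_bound _ (by positivity) fun μ => ?_
    rw [Real.norm_eq_abs]
    exact hb_bdd' w μ
  have est4 : α * ‖w‖ ^ 2 ≤ ‖b w‖ * ‖e‖ := by
    refine haww.trans ?_
    calc b w e ≤ |b w e| := le_abs_self _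
      _ = ‖b w e‖ := (Real.norm_eq_abs _).symm
      _ ≤ ‖b w‖ * ‖e‖ := ContinuousLinearMap.le_opNorm _ _
  have est4' : α * (β₀ / Ca') ^ 2 * ‖e‖ ≤ ‖b w‖ := by
    rcases eq_or_lt_of_le (norm_nonneg e) with h | h
    · rw [← h]; simpa using norm_nonneg (b w)
    · have hnn : (0:ℝ) ≤ β₀ / Ca' * ‖e‖ := by positivity
      have h1 : α * ((β₀ / Ca') * ‖e‖) ^ 2 ≤ α * ‖w‖ ^ 2 :=
        mul_le_mul_of_nonneg_left (pow_le_pow_left₀ hnn est2' 2) hα.le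
      have h2 : (α * (β₀ / Ca') ^ 2 * ‖e‖) * ‖e‖ ≤ ‖b w‖ * ‖e‖ := by
        calc (α * (β₀ / Ca') ^ 2 * ‖e‖) * ‖e‖ = α * ((β₀ / Ca') * ‖e‖) ^ 2 := by ring
          _ ≤ α * ‖w‖ ^ 2 := h1
          _ ≤ ‖b w‖ * ‖e‖ := est4
      exact le_of_mul_le_mul_right h2 h
  -- identity for the residual
  have hres : b (Ainv (f - b.flip lam₀)) + g = -(b w) := by
    have hg : ∀ μ : Λ, g μ = -(b u₀ μ) := by
      intro μ
      have := hsol 0 μ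
      simp only [map_zero, ContinuousLinearMap.zero_apply, zero_add] at this
      linarith
    ext μ
    have hbw : b w μ = b u₀ μ - b (Ainv (f - b.flip lam₀)) μ := by
      rw [hw_def, map_sub, ContinuousLinearMap.sub_apply]
    simp only [ContinuousLinearMap.add_apply, ContinuousLinearMap.neg_apply]
    rw [hg μ, hbw]
    ring
  have hresn : ‖b (Ainv (f - b.flip lam₀)) + g‖ = ‖b w‖ := by rw [hres, norm_neg]
  rw [hnorm_e, hresn]
  have hmin1 : min (β₀ / Ca') (α * (β₀ / Ca') ^ 2) ≤ β₀ / Ca' := min_le_left _ _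
  have hmin2 : min (β₀ / Ca') (α * (β₀ / Ca') ^ 2) ≤ α * (β₀ / Ca') ^ 2 := min_le_right _ _
  have hmax1 : Cb' / α ≤ max (Cb' / α) (Cb' ^ 2 / α) := le_max_left _ _
  have hmax2 : Cb' ^ 2 / α ≤ max (Cb' / α) (Cb' ^ 2 / α) := le_max_right _ _
  have hen : (0:ℝ) ≤ ‖e‖ := norm_nonneg e
  refine ⟨⟨?_, ?_⟩, ?_, ?_⟩
  · exact (mul_le_mul_of_nonneg_right hmin1 hen).trans est2'
  · exact est1.trans (mul_le_mul_of_nonneg_right hmax1 hen)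
  · exact (mul_le_mul_of_nonneg_right hmin2 hen).trans est4'
  · calc ‖b w‖ ≤ Cb' * ‖w‖ := est3
      _ ≤ Cb' * (Cb' / α * ‖e‖) := mul_le_mul_of_nonneg_left est1 hCb'pos.le
      _ = Cb' ^ 2 / α * ‖e‖ := by ring
      _ ≤ max (Cb' / α) (Cb' ^ 2 / α) * ‖e‖ := mul_le_mul_of_nonneg_right hmax2 hen
end

section
/- There exist constants c > 0 and C > 0, depending only on Ca, α, Cb and β₀, such that for every closed subspace Λ₀ ⊆ Λ and every χ ∈ Λ₀: c(‖λ₀ − χ‖_Λ + ‖u^{λ₀} − u^χ‖_U) ≤ sup_{0≠μ∈Λ₀} (b(u^χ,μ) + g(μ))/‖μ‖_Λ ≤ C(‖λ₀ − χ‖_Λ + ‖u^{λ₀} − u^χ‖_U). -/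
private lemma stmt_13_aux {α β C E W : ℝ} (hα : 0 < α) (hβ : 0 < β) (hC : 0 < C)
    (hE : 0 ≤ E) (hW : 0 ≤ W) (h : β * E ≤ C * W) :
    α * β ^ 2 / (C * (β + C)) * (E + W) * E ≤ α * W ^ 2 := by
  have hden : 0 < C * (β + C) := by positivity
  have hc : α * β ^ 2 / (C * (β + C)) * (C * (β + C)) = α * β ^ 2 :=
    div_mul_cancel₀ _ (ne_of_gt hden)
  set c := α * β ^ 2 / (C * (β + C)) with hcdef
  have hcpos : 0 < c := by positivity
  have h2 : β ^ 2 * E ^ 2 ≤ C ^ 2 * W ^ 2 := by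
    nlinarith [mul_self_le_mul_self (mul_nonneg hβ.le hE) h]
  have h3 : β * (E * W) ≤ C * W ^ 2 := by
    nlinarith [mul_le_mul_of_nonneg_right h hW]
  nlinarith [mul_le_mul_of_nonneg_left h2 hcpos.le,
    mul_le_mul_of_nonneg_left h3 (mul_nonneg hcpos.le hβ.le),
    mul_pos hβ hβ, hc, sq_nonneg W]

/-- A posteriori error estimation (Proposition apost, estimate (first1)): there are
constants `c, C > 0` depending only on `Ca, α, Cb, β₀` such that for every closed
subspace `Λ₀ ⊆ Λ` with Galerkin approximation `lam₀` of `lam` (= λ) and every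
`χ ∈ Λ₀`: `c(‖λ₀−χ‖ + ‖u^{λ₀}−u^χ‖) ≤ sup_{0≠μ∈Λ₀} (b(u^χ,μ)+g(μ))/‖μ‖
  ≤ C(‖λ₀−χ‖ + ‖u^{λ₀}−u^χ‖)`.
(At `μ = 0` the quotient is `0/0 = 0`, not affecting the supremum.) -/
theorem stmt_13
    {U Λ : Type*} [NormedAddCommGroup U] [InnerProductSpace ℝ U] [CompleteSpace U]
    [NormedAddCommGroup Λ] [InnerProductSpace ℝ Λ] [CompleteSpace Λ]
    (Ca α Cb β₀ : ℝ) (hα : 0 < α) (hβ₀ : 0 < β₀)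
    (a : U →L[ℝ] U →L[ℝ] ℝ) (b : U →L[ℝ] Λ →L[ℝ] ℝ)
    (ha_bdd : ∀ u v, |a u v| ≤ Ca * ‖u‖ * ‖v‖)
    (ha_symm : ∀ u v, a u v = a v u)
    (ha_coer : ∀ v, α * ‖v‖ ^ 2 ≤ a v v)
    (hb_bdd : ∀ v μ, |b v μ| ≤ Cb * ‖v‖ * ‖μ‖)
    (hb_infsup : ∀ μ : Λ, β₀ * ‖μ‖ ≤ ⨆ w : U, b w μ / ‖w‖)
    (Ainv : (U →L[ℝ] ℝ) →L[ℝ] U)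
    (hAinv : ∀ (φ : U →L[ℝ] ℝ) (v : U), a (Ainv φ) v = φ v)
    (f : U →L[ℝ] ℝ) (g : Λ →L[ℝ] ℝ) (u₀ : U) (lam : Λ)
    (hsol : ∀ (v : U) (μ : Λ), a u₀ v + b v lam + b u₀ μ = f v - g μ) :
    ∃ c > (0:ℝ), ∃ C > (0:ℝ), ∀ (Λ₀ : Submodule ℝ Λ), IsClosed (Λ₀ : Set Λ) →
      ∀ lam₀ : Λ₀,
        (∀ μ : Λ₀, b (Ainv (b.flip (lam₀ : Λ))) (μ : Λ) = b (Ainv (b.flip lam)) (μ : Λ)) →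
        ∀ χ : Λ₀,
          c * (‖(lam₀ : Λ) - (χ : Λ)‖
              + ‖Ainv (f - b.flip (lam₀ : Λ)) - Ainv (f - b.flip (χ : Λ))‖)
            ≤ (⨆ μ : Λ₀, (b (Ainv (f - b.flip (χ : Λ))) (μ : Λ) + g (μ : Λ)) / ‖(μ : Λ)‖)
          ∧ (⨆ μ : Λ₀, (b (Ainv (f - b.flip (χ : Λ))) (μ : Λ) + g (μ : Λ)) / ‖(μ : Λ)‖)
            ≤ C * (‖(lam₀ : Λ) - (χ : Λ)‖
              + ‖Ainv (f - b.flip (lam₀ : Λ)) - Ainv (f - b.flip (χ : Λ))‖) := by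

  classical
  set Ca' := max Ca α with hCa'def
  set Cb' := max Cb 1 with hCb'def
  have hCa' : 0 < Ca' := lt_max_of_lt_right hα
  have hCb' : 0 < Cb' := lt_max_of_lt_right one_pos
  have ha_bdd' : ∀ u v, |a u v| ≤ Ca' * ‖u‖ * ‖v‖ := by
    intro u v
    refine (ha_bdd u v).trans ?_
    exact mul_le_mul_of_nonneg_right
      (mul_le_mul_of_nonneg_right (le_max_left _ _) (norm_nonneg u)) (norm_nonneg v)
  have hb_bdd' : ∀ v μ, |b v μ| ≤ Cb' * ‖v‖ * ‖μ‖ := by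
    intro v μ
    refine (hb_bdd v μ).trans ?_
    exact mul_le_mul_of_nonneg_right
      (mul_le_mul_of_nonneg_right (le_max_left _ _) (norm_nonneg v)) (norm_nonneg μ)
  refine ⟨α * β₀ ^ 2 / (Ca' * (β₀ + Ca')), by positivity, Cb', hCb', ?_⟩
  intro Λ₀ _ lam₀ hGal χ
  have hzero : ∀ w : U, (∀ v, a w v = 0) → w = 0 := by
    intro w hw
    have h := ha_coer w
    rw [hw w] at h
    have h2 : ‖w‖ ^ 2 ≤ 0 := by nlinarith
    have h3 : ‖w‖ ^ 2 = 0 := le_antisymm h2 (sq_nonneg _)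
    have h4 : ‖w‖ = 0 := by
      exact (pow_eq_zero_iff two_ne_zero).mp h3
    simpa using h4
  have hu0 : u₀ = Ainv (f - b.flip lam) := by
    have h : ∀ v, a (u₀ - Ainv (f - b.flip lam)) v = 0 := by
      intro v
      have h1 := hsol v 0
      simp only [map_zero, add_zero, sub_zero] at h1
      have h2 := hAinv (f - b.flip lam) v
      simp only [ContinuousLinearMap.sub_apply, ContinuousLinearMap.flip_apply] at h2
      rw [map_sub, ContinuousLinearMap.sub_apply]
      linarith
    exact sub_eq_zero.mp (hzero _ h)
  set e : Λ := (lam₀ : Λ) - (χ : Λ) with he_def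
  set uχ : U := Ainv (f - b.flip (χ : Λ)) with huχ_def
  set w : U := Ainv (b.flip (lam₀ : Λ)) - Ainv (b.flip (χ : Λ)) with hw_def
  have haw : ∀ v, a w v = b v e := by
    intro v
    have h1 := hAinv (b.flip (lam₀ : Λ)) v
    have h2 := hAinv (b.flip (χ : Λ)) v
    simp only [ContinuousLinearMap.flip_apply] at h1 h2
    simp only [hw_def, he_def, map_sub, ContinuousLinearMap.sub_apply]
    rw [h1, h2]
  have hd : Ainv (f - b.flip (lam₀ : Λ)) - uχ = -w := by
    rw [huχ_def, hw_def]
    simp only [map_sub]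
    abel
  have hr : ∀ μ : Λ₀, b uχ (μ : Λ) + g (μ : Λ) = b w (μ : Λ) := by
    intro μ
    have hg : b u₀ (μ : Λ) = - g (μ : Λ) := by
      have h := hsol 0 (μ : Λ)
      simp only [map_zero, ContinuousLinearMap.zero_apply, zero_add] at h
      linarith
    have h1 : uχ - u₀ = Ainv (b.flip lam) - Ainv (b.flip (χ : Λ)) := by
      rw [hu0, huχ_def]
      simp only [map_sub]
      abel
    have h2 : b (uχ - u₀) (μ : Λ) = b uχ (μ : Λ) + g (μ : Λ) := by
      simp only [map_sub, ContinuousLinearMap.sub_apply]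
      linarith [hg]
    rw [← h2, h1]
    simp only [hw_def, map_sub, ContinuousLinearMap.sub_apply]
    rw [← hGal μ]
  have hterm : ∀ μ : Λ₀, (b uχ (μ : Λ) + g (μ : Λ)) / ‖(μ : Λ)‖ ≤ Cb' * ‖w‖ := by
    intro μ
    rw [hr μ]
    rcases eq_or_ne (μ : Λ) 0 with h0 | h0
    · rw [h0]
      simp only [map_zero, norm_zero, div_zero]
      positivity
    · rw [div_le_iff₀ (norm_pos_iff.mpr h0)]
      calc b w (μ : Λ) ≤ |b w (μ : Λ)| := le_abs_self _
        _ ≤ Cb' * ‖w‖ * ‖(μ : Λ)‖ := hb_bdd' w _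
  have hbdd : BddAbove (Set.range fun μ : Λ₀ => (b uχ (μ : Λ) + g (μ : Λ)) / ‖(μ : Λ)‖) :=
    ⟨Cb' * ‖w‖, by rintro x ⟨μ, rfl⟩; exact hterm μ⟩
  have hupper : (⨆ μ : Λ₀, (b uχ (μ : Λ) + g (μ : Λ)) / ‖(μ : Λ)‖) ≤ Cb' * ‖w‖ :=
    Real.iSup_le hterm (by positivity)
  have hS0 : (0:ℝ) ≤ ⨆ μ : Λ₀, (b uχ (μ : Λ) + g (μ : Λ)) / ‖(μ : Λ)‖ := by
    have h := le_ciSup hbdd (0 : Λ₀)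
    simpa using h
  have he_le : β₀ * ‖e‖ ≤ Ca' * ‖w‖ := by
    refine (hb_infsup e).trans (Real.iSup_le ?_ (by positivity))
    intro v
    rcases eq_or_ne v 0 with h0 | h0
    · rw [h0]
      simp only [map_zero, ContinuousLinearMap.zero_apply, norm_zero, zero_div, div_zero]
      positivity
    · rw [div_le_iff₀ (norm_pos_iff.mpr h0), ← haw v]
      calc a w v ≤ |a w v| := le_abs_self _
        _ ≤ Ca' * ‖w‖ * ‖v‖ := ha_bdd' w v
  have hcoer : α * ‖w‖ ^ 2 ≤ b w e := (ha_coer w).trans_eq (haw w)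
  have hw0 : e = 0 → w = 0 := by
    intro h
    have h1 := hcoer
    rw [h, map_zero] at h1
    have h2 : ‖w‖ ^ 2 ≤ 0 := by nlinarith
    have h3 : ‖w‖ ^ 2 = 0 := le_antisymm h2 (sq_nonneg _)
    have h4 : ‖w‖ = 0 := by
      exact (pow_eq_zero_iff two_ne_zero).mp h3
    simpa using h4
  rw [hd, norm_neg]
  constructor
  · rcases eq_or_ne e 0 with he0 | he0
    · rw [he0, hw0 he0]
      simp only [norm_zero, add_zero, mul_zero]
      exact hS0
    · have heE : 0 < ‖e‖ := norm_pos_iff.mpr he0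
      have hco : ((lam₀ - χ : Λ₀) : Λ) = e := by
        rw [he_def]; push_cast; ring
      have hkey : α * ‖w‖ ^ 2 / ‖e‖ ≤ ⨆ μ : Λ₀, (b uχ (μ : Λ) + g (μ : Λ)) / ‖(μ : Λ)‖ := by
        refine le_trans ?_ (le_ciSup hbdd (lam₀ - χ))
        rw [hr (lam₀ - χ), hco]
        exact (div_le_div_iff_of_pos_right heE).mpr hcoer
      refine le_trans ?_ hkey
      rw [le_div_iff₀ heE]
      exact stmt_13_aux hα hβ₀ hCa' (norm_nonneg e) (norm_nonneg w) he_le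
  · exact hupper.trans
      (mul_le_mul_of_nonneg_left (le_add_of_nonneg_left (norm_nonneg e)) hCb'.le)
end

section
/- Let M > β‖B‖_{L(U,Λ')}/((1−ρ)r) and suppose K ∈ ℕ is large enough that (1/√r)·[ρ^K·√R·((1+ζ) + Mζ) + (1/(1−ρ))·(β/√r)·‖B‖_{L(U,Λ')}] ≤ M. Then for all i ≥ 1 and 0 ≤ j ≤ K, ‖λ_{σ_i} − λ_{σ_i}^{(j)}‖_Λ ≤ (1/√r)·[ρ^j·√R·((1+ζ) + Mζ) + (1/(1−ρ))·(β/√r)·‖B‖_{L(U,Λ')}]·L·ζ^{−i}; in particular ‖λ_{σ_i} − λ_{σ_i}^{(K)}‖_Λ ≤ M·L·ζ^{−i} for all i ≥ 0. -/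
/-!
At level `i` the error `e_j = λ_{σ_i} - λ_{σ_i}^{(j)}` lies in `Λ_{σ_i}`, where Galerkin
orthogonality turns the inexact residual `B u^{(i,j)} + g` into
`S e_j + B (u^{(i,j)} - u^{λ^{(j)}})`. Each Uzawa step therefore contracts the seminorm
`√(M e e)` by `ρ` up to an additive `β ‖B‖ L ζ^{-i} / √r`, and summing the geometric series bounds
`‖e_j‖` by `ρ^j √R / √r` times the initial error plus `β ‖B‖ L ζ^{-i} / (r (1 - ρ))`. The triangle
inequality through `λ` and `λ_{σ_{i-1}}` bounds the initial error `λ_{σ_i} - λ_{σ_{i-1}}^{(K)}` by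
`((1 + ζ) + M ζ) L ζ^{-i}` as soon as level `i - 1` satisfies the final bound, and the choice of
`K` propagates that bound to level `i`.
-/

namespace ContinuousLinearMap

variable {V : Type*} [NormedAddCommGroup V] [NormedSpace ℝ V] (M : V →L[ℝ] V →L[ℝ] ℝ)

lemma sqrt_apply_add_le (hp : ∀ x, 0 ≤ M x x) (x y : V) :
    √(M (x + y) (x + y)) ≤ √(M x x) + √(M y y) := by
  have hcs := LinearMap.BilinForm.apply_mul_apply_le_of_forall_zero_le
    (M.toLinearMap₁₂ + M.toLinearMap₁₂.flip) (fun z => add_nonneg (hp z) (hp z)) x y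
  change (M x y + M y x) * (M y x + M x y) ≤ (M x x + M x x) * (M y y + M y y) at hcs
  have hcross : M x y + M y x ≤ 2 * (√(M x x) * √(M y y)) := by
    refine le_of_abs_le (abs_le_of_sq_le_sq ?_ (by positivity))
    rw [mul_pow, mul_pow, Real.sq_sqrt (hp x), Real.sq_sqrt (hp y)]
    linarith
  have hexp : M (x + y) (x + y) = M x x + (M x y + M y x) + M y y := by
    simp only [map_add, add_apply]; ring
  rw [Real.sqrt_le_left (by positivity), hexp, add_sq, Real.sq_sqrt (hp x), Real.sq_sqrt (hp y)]
  linarith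

lemma sqrt_apply_smul (c : ℝ) (x : V) : √(M (c • x) (c • x)) = |c| * √(M x x) := by
  simp only [map_smul, smul_apply, smul_eq_mul, ← mul_assoc]
  rw [Real.sqrt_mul (mul_self_nonneg c), Real.sqrt_mul_self_eq_abs]

lemma sqrt_mul_norm_le_sqrt_apply {r : ℝ} (hr : 0 ≤ r) {x : V} (h : r * ‖x‖ ^ 2 ≤ M x x) :
    √r * ‖x‖ ≤ √(M x x) := by
  rw [← Real.sqrt_sq (norm_nonneg x), ← Real.sqrt_mul hr]
  exact Real.sqrt_le_sqrt h

lemma sqrt_apply_le_sqrt_mul_norm {R : ℝ} {x : V} (h : M x x ≤ R * ‖x‖ ^ 2) :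
    √(M x x) ≤ √R * ‖x‖ := by
  rw [← Real.sqrt_sq (norm_nonneg x), ← Real.sqrt_mul' R (sq_nonneg _)]
  exact Real.sqrt_le_sqrt h

lemma sqrt_apply_le_norm_div_sqrt {r : ℝ} (hr : 0 < r) (hlow : ∀ x, r * ‖x‖ ^ 2 ≤ M x x)
    {w : V} {ψ : V →L[ℝ] ℝ} (hw : ∀ x, M w x = ψ x) : √(M w w) ≤ ‖ψ‖ / √r := by
  have hsr : 0 < √r := Real.sqrt_pos.mpr hr
  have hww : √(M w w) ^ 2 ≤ ‖ψ‖ / √r * √(M w w) := calc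
    √(M w w) ^ 2 = ψ w := by rw [Real.sq_sqrt (le_trans (by positivity) (hlow w)), hw]
    _ ≤ ‖ψ‖ * ‖w‖ := le_trans (le_abs_self _) (ψ.le_opNorm w)
    _ ≤ ‖ψ‖ * (√(M w w) / √r) := by
      gcongr
      rw [le_div_iff₀ hsr, mul_comm]
      exact M.sqrt_mul_norm_le_sqrt_apply hr.le (hlow w)
    _ = ‖ψ‖ / √r * √(M w w) := by ring
  nlinarith [Real.sqrt_nonneg (M w w), div_nonneg (norm_nonneg ψ) hsr.le]

lemma sqrt_apply_sub_smul_add_le {r β ρ : ℝ} (hr : 0 < r) (hlow : ∀ x, r * ‖x‖ ^ 2 ≤ M x x)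
    (Minv : (V →L[ℝ] ℝ) →L[ℝ] V) (hMinv : ∀ ψ x, M (Minv ψ) x = ψ x) (hβ : 0 ≤ β)
    {e : V} {φ ψ : V →L[ℝ] ℝ}
    (hcontract : √(M (e - β • Minv φ) (e - β • Minv φ)) ≤ ρ * √(M e e)) :
    √(M (e - β • Minv (φ + ψ)) (e - β • Minv (φ + ψ))) ≤ ρ * √(M e e) + β * (‖ψ‖ / √r) := by
  have hp : ∀ x, 0 ≤ M x x := fun x => le_trans (by positivity) (hlow x)
  have hsplit : e - β • Minv (φ + ψ) = (e - β • Minv φ) + (-β) • Minv ψ := by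
    rw [map_add, smul_add, neg_smul]; abel
  calc √(M (e - β • Minv (φ + ψ)) (e - β • Minv (φ + ψ)))
      ≤ √(M (e - β • Minv φ) (e - β • Minv φ)) + |-β| * √(M (Minv ψ) (Minv ψ)) := by
        rw [hsplit, ← sqrt_apply_smul]; exact M.sqrt_apply_add_le hp _ _
    _ ≤ ρ * √(M e e) + β * (‖ψ‖ / √r) := by
        rw [abs_neg, abs_of_nonneg hβ]
        gcongr
        exact M.sqrt_apply_le_norm_div_sqrt hr hlow (hMinv ψ)

end ContinuousLinearMap

lemma le_pow_mul_add_div_of_le_mul_add {t : ℕ → ℝ} {ρ c : ℝ} {K : ℕ} (hρ0 : 0 ≤ ρ) (hρ1 : ρ < 1)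
    (hc : 0 ≤ c) (hstep : ∀ j < K, t (j + 1) ≤ ρ * t j + c) :
    ∀ j ≤ K, t j ≤ ρ ^ j * t 0 + c / (1 - ρ) := by
  have h1ρ : 0 < 1 - ρ := by linarith
  intro j
  induction j with
  | zero => intro _; simpa using div_nonneg hc h1ρ.le
  | succ j ih =>
    intro hj
    calc t (j + 1) ≤ ρ * t j + c := hstep j hj
      _ ≤ ρ * (ρ ^ j * t 0 + c / (1 - ρ)) + c := by gcongr; exact ih (by omega)
      _ = ρ ^ (j + 1) * t 0 + c / (1 - ρ) := by field_simp; ring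

lemma norm_sub_le_of_inexact_richardson {Λ : Type*} [NormedAddCommGroup Λ] [NormedSpace ℝ Λ]
    {W : Submodule ℝ Λ} (M : W →L[ℝ] W →L[ℝ] ℝ) (Minv : (W →L[ℝ] ℝ) →L[ℝ] W)
    (S : Λ → Λ →L[ℝ] ℝ) {r R β ρ E ε : ℝ} (hr : 0 < r)
    (hM : ∀ μ, r * ‖μ‖ ^ 2 ≤ M μ μ ∧ M μ μ ≤ R * ‖μ‖ ^ 2) (hMinv : ∀ ψ μ, M (Minv ψ) μ = ψ μ)
    (hβ : 0 ≤ β) (hρ0 : 0 ≤ ρ) (hρ1 : ρ < 1) (hε : 0 ≤ ε)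
    (hcontract : ∀ μ : W, √(M (μ - β • Minv ((S μ).comp W.subtypeL))
        (μ - β • Minv ((S μ).comp W.subtypeL))) ≤ ρ * √(M μ μ))
    {K : ℕ} {x : Λ} {y : ℕ → Λ} (res : ℕ → W →L[ℝ] ℝ) (hx : x ∈ W) (hy : ∀ j ≤ K, y j ∈ W)
    (hstep : ∀ j < K, y (j + 1) = y j + ((β • Minv (res j) : W) : Λ))
    (hres : ∀ j < K, ‖res j - (S (x - y j)).comp W.subtypeL‖ ≤ ε) (hE : ‖x - y 0‖ ≤ E) :
    ∀ j ≤ K, ‖x - y j‖ ≤ (1 / √r) * (ρ ^ j * √R * E + (1 / (1 - ρ)) * (β / √r) * ε) := by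
  have hsr : 0 < √r := Real.sqrt_pos.mpr hr
  -- the errors `x - y j` as elements of `W`, clamped at `j = K` to get a total sequence
  let e : ℕ → W := fun j => ⟨x - y (min j K), sub_mem hx (hy _ (min_le_right j K))⟩
  have he : ∀ j ≤ K, (e j : Λ) = x - y j := fun j hj => by simp [e, min_eq_left hj]
  have hrec : ∀ j < K, e (j + 1) = e j - β • Minv (res j) := fun j hj => by
    ext1
    rw [Submodule.coe_sub, he _ hj, he _ hj.le, hstep j hj]
    abel
  have hdecay : ∀ j < K, √(M (e (j + 1)) (e (j + 1))) ≤ ρ * √(M (e j) (e j)) + β * (ε / √r) := by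
    intro j hj
    have hone := M.sqrt_apply_sub_smul_add_le hr (fun μ => (hM μ).1) Minv hMinv hβ
      (ψ := res j - (S (e j)).comp W.subtypeL) (hcontract (e j))
    rw [add_sub_cancel, ← hrec j hj, he j hj.le] at hone
    exact hone.trans (by gcongr; exact hres j hj)
  intro j hj
  have hgeom := le_pow_mul_add_div_of_le_mul_add (t := fun j => √(M (e j) (e j))) hρ0 hρ1
    (by positivity) hdecay j hj
  have hlow : √r * ‖x - y j‖ ≤ √(M (e j) (e j)) := by
    rw [← he j hj]; exact M.sqrt_mul_norm_le_sqrt_apply hr.le (hM (e j)).1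
  have hup : √(M (e 0) (e 0)) ≤ √R * E := by
    refine (M.sqrt_apply_le_sqrt_mul_norm (hM _).2).trans ?_
    rw [Submodule.coe_norm, he 0 (Nat.zero_le K)]
    gcongr
  rw [← mul_le_mul_iff_of_pos_left hsr]
  calc √r * ‖x - y j‖ ≤ ρ ^ j * √(M (e 0) (e 0)) + β * (ε / √r) / (1 - ρ) := hlow.trans hgeom
    _ ≤ ρ ^ j * (√R * E) + β * (ε / √r) / (1 - ρ) := by gcongr
    _ = _ := by field_simp

section SaddlePoint

variable {U Λ : Type*} [NormedAddCommGroup U] [NormedSpace ℝ U]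
  [NormedAddCommGroup Λ] [NormedSpace ℝ Λ]
  {a : U →L[ℝ] U →L[ℝ] ℝ} {b : U →L[ℝ] Λ →L[ℝ] ℝ} {Ainv : (U →L[ℝ] ℝ) →L[ℝ] U}
  {f : U →L[ℝ] ℝ} {g : Λ →L[ℝ] ℝ} {u₀ : U} {lam : Λ}

lemma eq_of_forall_apply_eq_of_coercive {α : ℝ} (hα : 0 < α) (ha : ∀ v, α * ‖v‖ ^ 2 ≤ a v v)
    {x y : U} (h : ∀ v, a x v = a y v) : x = y := by
  have hxy := ha (x - y)
  simp only [map_sub, sub_apply, h, sub_self] at hxy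
  have hsq : ‖x - y‖ ^ 2 ≤ 0 := le_of_mul_le_mul_left (by rwa [mul_zero]) hα
  rw [← sub_eq_zero, ← norm_eq_zero]
  exact pow_eq_zero_iff two_ne_zero |>.mp (le_antisymm hsq (sq_nonneg _))

lemma Ainv_sub_flip_eq_of_saddle {α : ℝ} (hα : 0 < α) (ha : ∀ v, α * ‖v‖ ^ 2 ≤ a v v)
    (hAinv : ∀ φ v, a (Ainv φ) v = φ v)
    (hsol : ∀ v μ, a u₀ v + b v lam + b u₀ μ = f v - g μ) :
    Ainv (f - b.flip lam) = u₀ := by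
  refine eq_of_forall_apply_eq_of_coercive hα ha fun v => ?_
  have := hsol v 0
  simp only [map_zero, add_zero] at this
  rw [hAinv, sub_apply, ContinuousLinearMap.flip_apply]
  linarith

/-- Galerkin orthogonality makes the exact residual `b u^χ + g` agree with `S (lamW - χ)` on `W`
(where `u^χ = Ainv (f - b.flip χ)`), so only the primal error `u^χ - u` is left over. -/
lemma norm_residual_sub_schur_le (hu₀ : Ainv (f - b.flip lam) = u₀)
    (hsol : ∀ v μ, a u₀ v + b v lam + b u₀ μ = f v - g μ) {W : Submodule ℝ Λ} {lamW : Λ}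
    (hGal : ∀ μ ∈ W, b (Ainv (b.flip lamW)) μ = b (Ainv (b.flip lam)) μ) (χ : Λ) (u : U) :
    ‖(b u + g).comp W.subtypeL - (b (Ainv (b.flip (lamW - χ)))).comp W.subtypeL‖
      ≤ ‖b‖ * ‖Ainv (f - b.flip χ) - u‖ := by
  have hbu₀ : ∀ μ, b u₀ μ = -g μ := fun μ => by
    have := hsol 0 μ
    simp only [map_zero, zero_apply, zero_add] at this
    linarith
  have hres : (b u + g).comp W.subtypeL - (b (Ainv (b.flip (lamW - χ)))).comp W.subtypeL
      = (b (u - Ainv (f - b.flip χ))).comp W.subtypeL := by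
    ext μ
    have hsplit : f - b.flip χ = (f - b.flip lam) + (b.flip lam - b.flip χ) := by abel
    rw [hsplit, map_add, hu₀]
    simp only [sub_apply, add_apply, ContinuousLinearMap.comp_apply, Submodule.subtypeL_apply,
      map_sub, map_add, hbu₀, hGal μ μ.2]
    ring
  rw [hres, norm_sub_rev _ u]
  calc ‖(b (u - Ainv (f - b.flip χ))).comp W.subtypeL‖ ≤ ‖b (u - Ainv (f - b.flip χ))‖ * 1 :=
        (ContinuousLinearMap.opNorm_comp_le _ _).trans
          (by gcongr; exact Submodule.norm_subtypeL_le W)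
    _ ≤ ‖b‖ * ‖u - Ainv (f - b.flip χ)‖ := by rw [mul_one]; exact b.le_opNorm _

end SaddlePoint

lemma norm_sub_le_of_previous_level {E : Type*} [SeminormedAddCommGroup E] {lam x x' y : E}
    {L ζ Mc : ℝ} {i : ℕ} (hζ : ζ ≠ 0) (hx : ‖lam - x‖ ≤ L * (ζ ^ (i + 1))⁻¹)
    (hx' : ‖lam - x'‖ ≤ L * (ζ ^ i)⁻¹) (hy : ‖x' - y‖ ≤ Mc * L * (ζ ^ i)⁻¹) :
    ‖x - y‖ ≤ ((1 + ζ) + Mc * ζ) * (L * (ζ ^ (i + 1))⁻¹) := calc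
  ‖x - y‖ = ‖(x' - y) + (lam - x') - (lam - x)‖ := by congr 1; abel
  _ ≤ ‖x' - y‖ + ‖lam - x'‖ + ‖lam - x‖ :=
    (norm_sub_le _ _).trans (by gcongr; exact norm_add_le _ _)
  _ ≤ Mc * L * (ζ ^ i)⁻¹ + L * (ζ ^ i)⁻¹ + L * (ζ ^ (i + 1))⁻¹ := by gcongr
  _ = ((1 + ζ) + Mc * ζ) * (L * (ζ ^ (i + 1))⁻¹) := by field_simp; ring

theorem stmt_14_general
    {U Λ : Type*} [NormedAddCommGroup U] [InnerProductSpace ℝ U]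
    [NormedAddCommGroup Λ] [InnerProductSpace ℝ Λ]
    (α : ℝ) (hα : 0 < α)
    (a : U →L[ℝ] U →L[ℝ] ℝ) (b : U →L[ℝ] Λ →L[ℝ] ℝ)
    (ha_coer : ∀ v, α * ‖v‖ ^ 2 ≤ a v v)
    (Ainv : (U →L[ℝ] ℝ) →L[ℝ] U)
    (hAinv : ∀ (φ : U →L[ℝ] ℝ) (v : U), a (Ainv φ) v = φ v)
    (f : U →L[ℝ] ℝ) (g : Λ →L[ℝ] ℝ) (u₀ : U) (lam : Λ)
    (hsol : ∀ (v : U) (μ : Λ), a u₀ v + b v lam + b u₀ μ = f v - g μ)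
    (Λσ : ℕ → Submodule ℝ Λ)
    (hbot : Λσ 0 = ⊥)
    (lamσ : ℕ → Λ) (hlamσmem : ∀ i, lamσ i ∈ Λσ i)
    (hGal : ∀ i, ∀ μ ∈ Λσ i, b (Ainv (b.flip (lamσ i))) μ = b (Ainv (b.flip lam)) μ)
    (r R : ℝ) (hr : 0 < r)
    (Mp : (i : ℕ) → (Λσ i) →L[ℝ] (Λσ i) →L[ℝ] ℝ)
    (hMbdd : ∀ i, 1 ≤ i → ∀ μ : Λσ i, r * ‖μ‖ ^ 2 ≤ Mp i μ μ ∧ Mp i μ μ ≤ R * ‖μ‖ ^ 2)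
    (Minv : (i : ℕ) → ((Λσ i) →L[ℝ] ℝ) →L[ℝ] (Λσ i))
    (hMinv : ∀ i, 1 ≤ i → ∀ (ψ : (Λσ i) →L[ℝ] ℝ) (μ : Λσ i), Mp i (Minv i ψ) μ = ψ μ)
    (β ρ : ℝ) (hβ : 0 < β) (hρ0 : 0 < ρ) (hρ1 : ρ < 1)
    (hcontract : ∀ i, 1 ≤ i → ∀ μ : Λσ i,
        Real.sqrt (Mp i (μ - β • Minv i ((b (Ainv (b.flip (μ : Λ)))).comp (Λσ i).subtypeL))
            (μ - β • Minv i ((b (Ainv (b.flip (μ : Λ)))).comp (Λσ i).subtypeL)))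
          ≤ ρ * Real.sqrt (Mp i μ μ))
    (ζ L : ℝ) (hζ : 1 < ζ) (hL : 0 < L)
    (happrox : ∀ i, ‖lam - lamσ i‖ ≤ L * (ζ ^ i)⁻¹)
    (K : ℕ) (uapp : ℕ → ℕ → U) (lamit : ℕ → ℕ → Λ)
    (hlamit0 : lamit 0 K = 0)
    (hlamitmem : ∀ i, 1 ≤ i → ∀ j ≤ K, lamit i j ∈ Λσ i)
    (hlamitinit : ∀ i, 1 ≤ i → lamit i 0 = lamit (i - 1) K)
    (huapp : ∀ i, 1 ≤ i → ∀ j < K,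
        ‖Ainv (f - b.flip (lamit i j)) - uapp i j‖ ≤ L * (ζ ^ i)⁻¹)
    (hlamitstep : ∀ i, 1 ≤ i → ∀ j < K,
        lamit i (j + 1)
          = lamit i j + ((β • Minv i ((b (uapp i j) + g).comp (Λσ i).subtypeL) : Λσ i) : Λ))
    (Mc : ℝ) (hMc : β * ‖b‖ / ((1 - ρ) * r) < Mc)
    (hK : (1 / Real.sqrt r) * (ρ ^ K * Real.sqrt R * ((1 + ζ) + Mc * ζ)
        + (1 / (1 - ρ)) * (β / Real.sqrt r) * ‖b‖) ≤ Mc) :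
    (∀ i, 1 ≤ i → ∀ j ≤ K,
        ‖lamσ i - lamit i j‖
          ≤ (1 / Real.sqrt r) * (ρ ^ j * Real.sqrt R * ((1 + ζ) + Mc * ζ)
              + (1 / (1 - ρ)) * (β / Real.sqrt r) * ‖b‖) * (L * (ζ ^ i)⁻¹))
    ∧ ∀ i : ℕ, ‖lamσ i - lamit i K‖ ≤ Mc * L * (ζ ^ i)⁻¹ := by
  have hMc0 : 0 ≤ Mc := le_trans (by have := sub_pos.mpr hρ1; positivity) hMc.le
  have hu₀ := Ainv_sub_flip_eq_of_saddle hα ha_coer hAinv hsol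
  have level : ∀ i, ‖lamσ i - lamit i K‖ ≤ Mc * L * (ζ ^ i)⁻¹ → ∀ j ≤ K,
      ‖lamσ (i + 1) - lamit (i + 1) j‖ ≤ (1 / √r) * (ρ ^ j * √R * ((1 + ζ) + Mc * ζ)
        + (1 / (1 - ρ)) * (β / √r) * ‖b‖) * (L * (ζ ^ (i + 1))⁻¹) := by
    intro i hprev j hj
    have hi : 1 ≤ i + 1 := Nat.le_add_left 1 i
    have hinit : ‖lamσ (i + 1) - lamit (i + 1) 0‖ ≤ ((1 + ζ) + Mc * ζ) * (L * (ζ ^ (i + 1))⁻¹) := by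
      rw [hlamitinit _ hi, Nat.add_sub_cancel]
      exact norm_sub_le_of_previous_level (by positivity) (happrox _) (happrox i) hprev
    refine (norm_sub_le_of_inexact_richardson (Mp (i + 1)) (Minv (i + 1))
      (fun χ => b (Ainv (b.flip χ))) hr (hMbdd _ hi) (hMinv _ hi) hβ.le hρ0.le hρ1
      (ε := ‖b‖ * (L * (ζ ^ (i + 1))⁻¹)) (by positivity) (hcontract _ hi) _ (hlamσmem _)
      (hlamitmem _ hi) (hlamitstep _ hi) (fun j hj => ?_) hinit j hj).trans_eq (by ring)
    exact (norm_residual_sub_schur_le hu₀ hsol (hGal _) _ _).trans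
      (by gcongr; exact huapp _ hi j hj)
  have final : ∀ i, ‖lamσ i - lamit i K‖ ≤ Mc * L * (ζ ^ i)⁻¹ := by
    intro i
    induction i with
    | zero =>
      have hlamσ0 : lamσ 0 = 0 := by simpa [hbot] using hlamσmem 0
      simp only [hlamσ0, hlamit0, sub_zero, norm_zero, pow_zero, inv_one, mul_one]
      positivity
    | succ i ih =>
      calc _ ≤ _ := level i ih K le_rfl
        _ ≤ Mc * (L * (ζ ^ (i + 1))⁻¹) := by gcongr
        _ = Mc * L * (ζ ^ (i + 1))⁻¹ := by ring
  refine ⟨fun i hi j hj => ?_, final⟩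
  obtain ⟨i, rfl⟩ : ∃ k, i = k + 1 := ⟨i - 1, by omega⟩
  exact level i (final i) j hj

/-- Lemma basic, first part: convergence of the nested inexact preconditioned Uzawa
iteration. With `Mc > β‖B‖/((1−ρ)r)` and `K` large enough that
`(1/√r)[ρ^K √R ((1+ζ)+Mc·ζ) + (1/(1−ρ))(β/√r)‖B‖] ≤ Mc`, it holds for all `i ≥ 1` and
`0 ≤ j ≤ K` that `‖λ_{σ_i} − λ_{σ_i}^{(j)}‖ ≤ (1/√r)[ρ^j √R ((1+ζ)+Mc·ζ)
+ (1/(1−ρ))(β/√r)‖B‖]·L·ζ^{−i}`; in particular `‖λ_{σ_i} − λ_{σ_i}^{(K)}‖ ≤ Mc·L·ζ^{−i}`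
for all `i ≥ 0`. Here `‖B‖ = ‖b‖`, `lamσ i` is the Galerkin approximation of `lam` (= λ)
from `Λσ i`, and `lamit i j` is the iterate `λ_{σ_i}^{(j)}`. -/
theorem stmt_14
    {U Λ : Type*} [NormedAddCommGroup U] [InnerProductSpace ℝ U] [CompleteSpace U]
    [NormedAddCommGroup Λ] [InnerProductSpace ℝ Λ] [CompleteSpace Λ]
    (Ca α Cb β₀ : ℝ) (hα : 0 < α) (hβ₀ : 0 < β₀)
    (a : U →L[ℝ] U →L[ℝ] ℝ) (b : U →L[ℝ] Λ →L[ℝ] ℝ)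
    (ha_bdd : ∀ u v, |a u v| ≤ Ca * ‖u‖ * ‖v‖)
    (ha_symm : ∀ u v, a u v = a v u)
    (ha_coer : ∀ v, α * ‖v‖ ^ 2 ≤ a v v)
    (hb_bdd : ∀ v μ, |b v μ| ≤ Cb * ‖v‖ * ‖μ‖)
    (hb_infsup : ∀ μ : Λ, β₀ * ‖μ‖ ≤ ⨆ w : U, b w μ / ‖w‖)
    (Ainv : (U →L[ℝ] ℝ) →L[ℝ] U)
    (hAinv : ∀ (φ : U →L[ℝ] ℝ) (v : U), a (Ainv φ) v = φ v)
    (f : U →L[ℝ] ℝ) (g : Λ →L[ℝ] ℝ) (u₀ : U) (lam : Λ)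
    (hsol : ∀ (v : U) (μ : Λ), a u₀ v + b v lam + b u₀ μ = f v - g μ)
    (Λσ : ℕ → Submodule ℝ Λ)
    (hclosed : ∀ i, IsClosed ((Λσ i : Set Λ)))
    (hbot : Λσ 0 = ⊥)
    (hnested : ∀ i, Λσ i ≤ Λσ (i + 1))
    (lamσ : ℕ → Λ) (hlamσmem : ∀ i, lamσ i ∈ Λσ i)
    (hGal : ∀ i, ∀ μ ∈ Λσ i, b (Ainv (b.flip (lamσ i))) μ = b (Ainv (b.flip lam)) μ)
    (r R : ℝ) (hr : 0 < r) (hrR : r ≤ R)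
    (Mp : (i : ℕ) → (Λσ i) →L[ℝ] (Λσ i) →L[ℝ] ℝ)
    (hMsymm : ∀ i, 1 ≤ i → ∀ μ ν : Λσ i, Mp i μ ν = Mp i ν μ)
    (hMbdd : ∀ i, 1 ≤ i → ∀ μ : Λσ i, r * ‖μ‖ ^ 2 ≤ Mp i μ μ ∧ Mp i μ μ ≤ R * ‖μ‖ ^ 2)
    (Minv : (i : ℕ) → ((Λσ i) →L[ℝ] ℝ) →L[ℝ] (Λσ i))
    (hMinv : ∀ i, 1 ≤ i → ∀ (ψ : (Λσ i) →L[ℝ] ℝ) (μ : Λσ i), Mp i (Minv i ψ) μ = ψ μ)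
    (β ρ : ℝ) (hβ : 0 < β) (hρ0 : 0 < ρ) (hρ1 : ρ < 1)
    (hcontract : ∀ i, 1 ≤ i → ∀ μ : Λσ i,
        Real.sqrt (Mp i (μ - β • Minv i ((b (Ainv (b.flip (μ : Λ)))).comp (Λσ i).subtypeL))
            (μ - β • Minv i ((b (Ainv (b.flip (μ : Λ)))).comp (Λσ i).subtypeL)))
          ≤ ρ * Real.sqrt (Mp i μ μ))
    (ζ L : ℝ) (hζ : 1 < ζ) (hL : 0 < L)
    (happrox : ∀ i, ‖lam - lamσ i‖ ≤ L * (ζ ^ i)⁻¹)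
    (K : ℕ) (uapp : ℕ → ℕ → U) (lamit : ℕ → ℕ → Λ)
    (hlamit0 : lamit 0 K = 0)
    (hlamitmem : ∀ i, 1 ≤ i → ∀ j ≤ K, lamit i j ∈ Λσ i)
    (hlamitinit : ∀ i, 1 ≤ i → lamit i 0 = lamit (i - 1) K)
    (huapp : ∀ i, 1 ≤ i → ∀ j < K,
        ‖Ainv (f - b.flip (lamit i j)) - uapp i j‖ ≤ L * (ζ ^ i)⁻¹)
    (hlamitstep : ∀ i, 1 ≤ i → ∀ j < K,
        lamit i (j + 1)
          = lamit i j + ((β • Minv i ((b (uapp i j) + g).comp (Λσ i).subtypeL) : Λσ i) : Λ))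
    (Mc : ℝ) (hMc : β * ‖b‖ / ((1 - ρ) * r) < Mc)
    (hK : (1 / Real.sqrt r) * (ρ ^ K * Real.sqrt R * ((1 + ζ) + Mc * ζ)
        + (1 / (1 - ρ)) * (β / Real.sqrt r) * ‖b‖) ≤ Mc) :
    (∀ i, 1 ≤ i → ∀ j ≤ K,
        ‖lamσ i - lamit i j‖
          ≤ (1 / Real.sqrt r) * (ρ ^ j * Real.sqrt R * ((1 + ζ) + Mc * ζ)
              + (1 / (1 - ρ)) * (β / Real.sqrt r) * ‖b‖) * (L * (ζ ^ i)⁻¹))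
    ∧ ∀ i : ℕ, ‖lamσ i - lamit i K‖ ≤ Mc * L * (ζ ^ i)⁻¹ :=
  stmt_14_general α hα a b ha_coer Ainv hAinv f g u₀ lam hsol Λσ hbot lamσ hlamσmem hGal r R hr Mp
    hMbdd Minv hMinv β ρ hβ hρ0 hρ1 hcontract ζ L hζ hL happrox K uapp lamit hlamit0 hlamitmem
    hlamitinit huapp hlamitstep Mc hMc hK
end
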